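/- arXiv:1505.02178 — 2 statements merged into one kernel-verified Lean document; each statement's English description precedes it below -/
import Mathlib

section
/- Let u : ℂ → ℂ be analytic on an open set U avoiding the points 0 and 1, and suppose u satisfies the confluent Heun equation u'' + (γ/z + δ/(z-1) + ε) u' + (αz - q)/(z(z-1)) u = 0 on U. Define v(z) = z^γ (z-1)^δ u'(z) (using fixed branches of the powers on U). Then v satisfies on U the equation v'' + ((1-γ)/z + (1-δ)/(z-1) + ε - 1/(z - z₀)) v' + Π(z)/(z(z-1)(z - z₀)) v = 0, where z₀ = q/α (assuming α ≠ 0 and z₀ ∉ U) and Π(z) = (α - (δ+γ-1)ε) z² + (γε - z₀(2α + ε(2-δ-γ))) z + z₀(z₀α + ε - γε). -/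
/-!
With `w = z^γ (z-1)^δ` and `Q = (αz - q)/(z(z-1)) = α(z - z₀)/(z(z-1))`, the equation for `u`
says `(w u')' = w (u'' + (γ/z + δ/(z-1)) u') = -ε w u' - w Q u`, i.e. `v' = -ε v - (wQ) u`.
Differentiating once more and using `(wQ) u' = Q v` and `(wQ) u = -(v' + ε v)` eliminates `u`;
the coefficients of the resulting equation come from the logarithmic derivative
`(γ - 1)/z + (δ - 1)/(z - 1) + 1/(z - z₀)` of `wQ`, which is where the new singularity `z₀`
appears.
-/

open Filter Topology

section LogarithmicDerivative

variable {𝕜 : Type*} [NontriviallyNormedField 𝕜] {f g u v h : 𝕜 → 𝕜} {x a b : 𝕜}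

theorem HasDerivAt.mul_of_logDeriv (hf : HasDerivAt f (a * f x) x)
    (hg : HasDerivAt g (b * g x) x) :
    HasDerivAt (fun y => f y * g y) ((a + b) * (f x * g x)) x :=
  (hf.mul hg).congr_deriv <| by ring

theorem HasDerivAt.mul_integratingFactor (hf : HasDerivAt f (a * f x) x)
    (hu : HasDerivAt u b x) :
    HasDerivAt (fun y => f y * u y) (f x * (b + a * u x)) x :=
  (hf.mul hu).congr_deriv <| by ring

/-- Eliminating `u` from the system `v' = -ε v - h u`, `h u' = Q v`, where `h` has
logarithmic derivative `M`, gives a second-order equation for `v`. -/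
theorem deriv_deriv_add_of_eventually_hasDerivAt {ε M Q u' : 𝕜}
    (hv : ∀ᶠ y in 𝓝 x, HasDerivAt v (-ε * v y - h y * u y) y)
    (hh : HasDerivAt h (M * h x) x) (hu : HasDerivAt u u' x) (hQ : h x * u' = Q * v x) :
    deriv (deriv v) x + (ε - M) * deriv v x + (Q - M * ε) * v x = 0 := by
  have hv_x : HasDerivAt v (-ε * v x - h x * u x) x := hv.self_of_nhds
  have hderiv : deriv v =ᶠ[𝓝 x] fun y => -ε * v y - h y * u y :=
    hv.mono fun y hy => hy.deriv
  rw [hderiv.deriv_eq, ((hv_x.const_mul (-ε)).fun_sub (hh.fun_mul hu)).deriv, hv_x.deriv]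
  linear_combination -hQ

end LogarithmicDerivative

theorem hasDerivAt_mul_sub_div_mul_sub_one {α q z : ℂ} (hα : α ≠ 0) (hz : z ≠ 0)
    (hz1 : z - 1 ≠ 0) (hq : α * z - q ≠ 0) :
    HasDerivAt (fun y => (α * y - q) / (y * (y - 1)))
      ((1 / (z - q / α) - 1 / z - 1 / (z - 1)) * ((α * z - q) / (z * (z - 1)))) z := by
  have hnum : HasDerivAt (fun y : ℂ => α * y - q) α z := by
    simpa using ((hasDerivAt_id z).const_mul α).sub_const q
  have hden : HasDerivAt (fun y : ℂ => y * (y - 1)) (1 * (z - 1) + z * 1) z :=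
    (hasDerivAt_id z).mul ((hasDerivAt_id z).sub_const 1)
  refine (hnum.div hden (mul_ne_zero hz hz1)).congr_deriv ?_
  field_simp
  ring

theorem confluentHeun_Pi_div_eq (γ δ ε : ℂ) {α q z : ℂ} (hα : α ≠ 0) (hz : z ≠ 0)
    (hz1 : z - 1 ≠ 0) (hq : α * z - q ≠ 0) :
    ((α - (δ + γ - 1) * ε) * z ^ 2
        + (γ * ε - (q / α) * (2 * α + ε * (2 - δ - γ))) * z
        + (q / α) * ((q / α) * α + ε - γ * ε)) / (z * (z - 1) * (z - q / α))
      = (α * z - q) / (z * (z - 1))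
        - (γ / z + δ / (z - 1) + (1 / (z - q / α) - 1 / z - 1 / (z - 1))) * ε := by
  field_simp
  ring

theorem confluentHeun_derivative_equation_general
    (γ δ ε α q : ℂ) (hα : α ≠ 0) (U : Set ℂ) (hU : IsOpen U)
    (h0 : (0 : ℂ) ∉ U) (h1 : (1 : ℂ) ∉ U) (hz0 : q / α ∉ U)
    (u f g : ℂ → ℂ)
    (hu : AnalyticOnNhd ℂ u U)
    (hf : AnalyticOnNhd ℂ f U) (hg : AnalyticOnNhd ℂ g U)
    (hf' : ∀ z ∈ U, deriv f z = γ * f z / z)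
    (hg' : ∀ z ∈ U, deriv g z = δ * g z / (z - 1))
    (hode : ∀ z ∈ U,
      deriv (deriv u) z + (γ / z + δ / (z - 1) + ε) * deriv u z
        + (α * z - q) / (z * (z - 1)) * u z = 0)
    (v : ℂ → ℂ) (hv : ∀ z, v z = f z * g z * deriv u z) :
    ∀ z ∈ U,
      deriv (deriv v) z
        + ((1 - γ) / z + (1 - δ) / (z - 1) + ε - 1 / (z - q / α)) * deriv v z
        + ((α - (δ + γ - 1) * ε) * z ^ 2
            + (γ * ε - (q / α) * (2 * α + ε * (2 - δ - γ))) * z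
            + (q / α) * ((q / α) * α + ε - γ * ε))
          / (z * (z - 1) * (z - q / α)) * v z = 0 := by
  have hv_eq : v = fun y => f y * g y * deriv u y := funext hv
  set Q : ℂ → ℂ := fun y => (α * y - q) / (y * (y - 1))
  have hfg : ∀ y ∈ U,
      HasDerivAt (fun y => f y * g y) ((γ / y + δ / (y - 1)) * (f y * g y)) y :=
    fun y hy => by
      refine HasDerivAt.mul_of_logDeriv ?_ ?_
      · simpa [hf' y hy, mul_div_right_comm] using (hf y hy).differentiableAt.hasDerivAt
      · simpa [hg' y hy, mul_div_right_comm] using (hg y hy).differentiableAt.hasDerivAt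
  have hv' : ∀ y ∈ U, HasDerivAt v (-ε * v y - (f y * g y * Q y) * u y) y := fun y hy => by
    rw [hv_eq]
    exact ((hfg y hy).mul_integratingFactor
      (hu.deriv y hy).differentiableAt.hasDerivAt).congr_deriv
        (by linear_combination (f y * g y) * hode y hy)
  intro z hz
  have hz0' : z ≠ 0 := fun h => h0 (h ▸ hz)
  have hz1' : z - 1 ≠ 0 := sub_ne_zero.2 fun h => h1 (h ▸ hz)
  have hq : α * z - q ≠ 0 := by
    rw [show α * z - q = α * (z - q / α) by field_simp]
    exact mul_ne_zero hα (sub_ne_zero.2 fun h => hz0 (h ▸ hz))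
  have hsecond := deriv_deriv_add_of_eventually_hasDerivAt
    (eventually_of_mem (hU.mem_nhds hz) hv')
    ((hfg z hz).mul_of_logDeriv (hasDerivAt_mul_sub_div_mul_sub_one hα hz0' hz1' hq))
    (hu z hz).differentiableAt.hasDerivAt (Q := Q z) (by rw [hv z]; ring)
  rw [confluentHeun_Pi_div_eq γ δ ε hα hz0' hz1' hq]
  linear_combination hsecond

/-- If `u` solves the confluent Heun equation on an open set `U` avoiding `0`, `1` and
`z₀ = q/α`, and `v = z^γ (z-1)^δ u'` (with `f`, `g` fixed analytic branches of `z^γ`,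
`(z-1)^δ` characterized by their logarithmic derivatives), then `v` solves Eq. (3). -/
theorem confluentHeun_derivative_equation
    (γ δ ε α q : ℂ) (hα : α ≠ 0) (U : Set ℂ) (hU : IsOpen U)
    (h0 : (0 : ℂ) ∉ U) (h1 : (1 : ℂ) ∉ U) (hz0 : q / α ∉ U)
    (u f g : ℂ → ℂ)
    (hu : AnalyticOnNhd ℂ u U)
    (hf : AnalyticOnNhd ℂ f U) (hg : AnalyticOnNhd ℂ g U)
    (hfne : ∀ z ∈ U, f z ≠ 0) (hgne : ∀ z ∈ U, g z ≠ 0)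
    (hf' : ∀ z ∈ U, deriv f z = γ * f z / z)
    (hg' : ∀ z ∈ U, deriv g z = δ * g z / (z - 1))
    (hode : ∀ z ∈ U,
      deriv (deriv u) z + (γ / z + δ / (z - 1) + ε) * deriv u z
        + (α * z - q) / (z * (z - 1)) * u z = 0)
    (v : ℂ → ℂ) (hv : ∀ z, v z = f z * g z * deriv u z) :
    ∀ z ∈ U,
      deriv (deriv v) z
        + ((1 - γ) / z + (1 - δ) / (z - 1) + ε - 1 / (z - q / α)) * deriv v z
        + ((α - (δ + γ - 1) * ε) * z ^ 2
            + (γ * ε - (q / α) * (2 * α + ε * (2 - δ - γ))) * z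
            + (q / α) * ((q / α) * α + ε - γ * ε))
          / (z * (z - 1) * (z - q / α)) * v z = 0 :=
  confluentHeun_derivative_equation_general γ δ ε α q hα U hU h0 h1 hz0 u f g hu hf hg hf' hg' hode
    v hv
end

section
/- Let w be analytic on a simply connected open set U avoiding 0, 1, z₁, z₂ and satisfy w'' + (γ/z + δ/(z-1))w' + p₀(z-z₁)(z-z₂)/(z(z-1)) w = 0, where p₀ = -ε²/4 ≠ 0. Define v(z) = z^γ (z-1)^δ w'(z) using fixed branches. Then v satisfies v'' + ((1-γ)/z + (1-δ)/(z-1) - 1/(z-z₁) - 1/(z-z₂)) v' + p₀(z-z₁)(z-z₂)/(z(z-1)) v = 0 on U. -/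
open Complex

set_option maxHeartbeats 1000000 in
lemma key_alg_second_type (x t s1 s2 p a b c d γ δ : ℂ)
    (h0 : x ≠ 0) (h1 : t ≠ 0) (h2 : s1 ≠ 0) (h3 : s2 ≠ 0) :
    ((-((p * s1 + p * s2) * (a * b * c)
        + p * s1 * s2 * ((γ * a / x * b + a * (δ * b / t)) * c + a * b * d)) * (x * t)
      - -(p * s1 * s2 * (a * b * c)) * (1 * t + x * 1)) / (x * t) ^ 2)
    + ((1 - γ) / x + (1 - δ) / t - 1 / s1 - 1 / s2) *
        (-(p * s1 * s2 * (a * b * c)) / (x * t))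
    + p * s1 * s2 / (x * t) * (a * b * d) = 0 := by
  field_simp
  ring_nf


/-- If `w` solves Eq. (22) with factorized quadratic `p₀ (z-z₁)(z-z₂)`, `p₀ = -ε²/4 ≠ 0`,
on an open set `U` avoiding `0, 1, z₁, z₂`, and `v = z^γ (z-1)^δ w'` (with fixed analytic
branches `f`, `g`), then `v` solves Eq. (25). -/
theorem second_type_derivative_equation
    (γ δ ε p₀ : ℂ) (hε : ε ≠ 0) (hp₀ : p₀ = -ε ^ 2 / 4)
    (z₁ z₂ : ℂ) (U : Set ℂ) (hU : IsOpen U)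
    (h0 : (0 : ℂ) ∉ U) (h1 : (1 : ℂ) ∉ U) (hz1 : z₁ ∉ U) (hz2 : z₂ ∉ U)
    (w f g : ℂ → ℂ) (hw : AnalyticOnNhd ℂ w U)
    (hf : AnalyticOnNhd ℂ f U) (hg : AnalyticOnNhd ℂ g U)
    (hfne : ∀ z ∈ U, f z ≠ 0) (hgne : ∀ z ∈ U, g z ≠ 0)
    (hf' : ∀ z ∈ U, deriv f z = γ * f z / z)
    (hg' : ∀ z ∈ U, deriv g z = δ * g z / (z - 1))
    (hode : ∀ z ∈ U,
      deriv (deriv w) z + (γ / z + δ / (z - 1)) * deriv w z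
        + p₀ * (z - z₁) * (z - z₂) / (z * (z - 1)) * w z = 0)
    (v : ℂ → ℂ) (hv : ∀ z, v z = f z * g z * deriv w z) :
    ∀ z ∈ U,
      deriv (deriv v) z
        + ((1 - γ) / z + (1 - δ) / (z - 1) - 1 / (z - z₁) - 1 / (z - z₂)) * deriv v z
        + p₀ * (z - z₁) * (z - z₂) / (z * (z - 1)) * v z = 0 := by
  have hveq : v = fun z => f z * g z * deriv w z := funext hv
  have hw' : AnalyticOnNhd ℂ (deriv w) U := hw.deriv
  -- derivative of v on U
  have hderiv : ∀ z ∈ U, deriv v z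
      = -(p₀ * (z - z₁) * (z - z₂) * (f z * g z * w z)) / (z * (z - 1)) := by
    intro z hz
    have hz0 : z ≠ 0 := fun h => h0 (h ▸ hz)
    have hz1' : z - 1 ≠ 0 := sub_ne_zero.mpr (fun h => h1 (h ▸ hz))
    have hF : HasDerivAt f (γ * f z / z) z := by
      have := (hf z hz).differentiableAt.hasDerivAt
      rwa [hf' z hz] at this
    have hG : HasDerivAt g (δ * g z / (z - 1)) z := by
      have := (hg z hz).differentiableAt.hasDerivAt
      rwa [hg' z hz] at this
    have hW' : HasDerivAt (deriv w) (deriv (deriv w) z) z :=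
      (hw' z hz).differentiableAt.hasDerivAt
    have hV : HasDerivAt v ((γ * f z / z * g z + f z * (δ * g z / (z - 1))) * deriv w z
        + f z * g z * deriv (deriv w) z) z := by
      rw [hveq]; exact (hF.mul hG).mul hW'
    rw [hV.deriv]
    have hode' := hode z hz
    have hww : deriv (deriv w) z = -((γ / z + δ / (z - 1)) * deriv w z)
        - p₀ * (z - z₁) * (z - z₂) / (z * (z - 1)) * w z := by linear_combination hode'
    rw [hww]
    field_simp [hz0, hz1']
    ring
  intro z hz
  have hz0 : z ≠ 0 := fun h => h0 (h ▸ hz)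
  have hz1' : z - 1 ≠ 0 := sub_ne_zero.mpr (fun h => h1 (h ▸ hz))
  have hzz1 : z - z₁ ≠ 0 := sub_ne_zero.mpr (fun h => hz1 (h ▸ hz))
  have hzz2 : z - z₂ ≠ 0 := sub_ne_zero.mpr (fun h => hz2 (h ▸ hz))
  -- second derivative of v at z
  have hF : HasDerivAt f (γ * f z / z) z := by
    have := (hf z hz).differentiableAt.hasDerivAt
    rwa [hf' z hz] at this
  have hG : HasDerivAt g (δ * g z / (z - 1)) z := by
    have := (hg z hz).differentiableAt.hasDerivAt
    rwa [hg' z hz] at this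
  have hW : HasDerivAt w (deriv w z) z := (hw z hz).differentiableAt.hasDerivAt
  have hq : HasDerivAt (fun y => p₀ * (y - z₁) * (y - z₂))
      (p₀ * (z - z₁) + p₀ * (z - z₂)) z := by
    have h1' : HasDerivAt (fun y => p₀ * (y - z₁)) p₀ z := by
      simpa using ((hasDerivAt_id z).sub_const z₁).const_mul p₀
    have := h1'.mul ((hasDerivAt_id z).sub_const z₂)
    exact this.congr_deriv (by simp only [id]; ring)
  have hu : HasDerivAt (fun y => f y * g y * w y)
      ((γ * f z / z * g z + f z * (δ * g z / (z - 1))) * w z + f z * g z * deriv w z) z :=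
    (hF.mul hG).mul hW
  have hD : HasDerivAt (fun y => y * (y - 1)) (1 * (z - 1) + z * 1) z :=
    (hasDerivAt_id z).mul ((hasDerivAt_id z).sub_const 1)
  have hDz : z * (z - 1) ≠ 0 := mul_ne_zero hz0 hz1'
  have hN : HasDerivAt (fun y => -(p₀ * (y - z₁) * (y - z₂) * (f y * g y * w y)))
      (-((p₀ * (z - z₁) + p₀ * (z - z₂)) * (f z * g z * w z)
        + p₀ * (z - z₁) * (z - z₂) *
          ((γ * f z / z * g z + f z * (δ * g z / (z - 1))) * w z + f z * g z * deriv w z))) z :=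
    (hq.mul hu).neg
  have hH : HasDerivAt
      (fun y => -(p₀ * (y - z₁) * (y - z₂) * (f y * g y * w y)) / (y * (y - 1)))
      ((-((p₀ * (z - z₁) + p₀ * (z - z₂)) * (f z * g z * w z)
        + p₀ * (z - z₁) * (z - z₂) *
          ((γ * f z / z * g z + f z * (δ * g z / (z - 1))) * w z + f z * g z * deriv w z))
        * (z * (z - 1))
        - -(p₀ * (z - z₁) * (z - z₂) * (f z * g z * w z)) * (1 * (z - 1) + z * 1))
        / (z * (z - 1)) ^ 2) z :=
    hN.div hD hDz
  have hdd : deriv (deriv v) z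
      = (-((p₀ * (z - z₁) + p₀ * (z - z₂)) * (f z * g z * w z)
        + p₀ * (z - z₁) * (z - z₂) *
          ((γ * f z / z * g z + f z * (δ * g z / (z - 1))) * w z + f z * g z * deriv w z))
        * (z * (z - 1))
        - -(p₀ * (z - z₁) * (z - z₂) * (f z * g z * w z)) * (1 * (z - 1) + z * 1))
        / (z * (z - 1)) ^ 2 := by
    have heq : deriv v =ᶠ[nhds z]
        (fun y => -(p₀ * (y - z₁) * (y - z₂) * (f y * g y * w y)) / (y * (y - 1))) := by
      filter_upwards [hU.mem_nhds hz] with y hy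
      exact hderiv y hy
    rw [heq.deriv_eq, hH.deriv]
  rw [hdd, hderiv z hz, hv z]
  exact key_alg_second_type z (z - 1) (z - z₁) (z - z₂) p₀ (f z) (g z) (w z) (deriv w z)
    γ δ hz0 hz1' hzz1 hzz2
end
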